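/- Let G be a group, k a field, and kG its group algebra with standard Hopf structure. For a function a: G × G → k, define φ: kG ⊗ kG → kG by φ(x ⊗ y) = Σ_u a_u(x,y) u for x, y ∈ G. Then φ satisfies both adjoint 2-cocycle conditions: (i) ad(φ ⊗ 1) + φ(ad ⊗ 1) − φ(1 ⊗ μ) = 0 and (ii) (φ ⊗ μ)(1 ⊗ τ ⊗ 1)(Δ ⊗ Δ) = (1 ⊗ μ)(τ ⊗ 1)(1 ⊗ Δ)(1 ⊗ φ)(τ ⊗ 1)(1 ⊗ Δ), if and only if a_u(x,y) = 0 unless u = y⁻¹xy, and the function a(x,y) := a_{y⁻¹xy}(x,y) satisfies a(x,y) + a(x ◁ y, z) − a(x, yz) = 0 for all x, y, z ∈ G, where x ◁ y = y⁻¹xy. -/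

import Mathlib

/-! Both conditions can be tested on basis tensors of group elements, where they become
identities between the structure constants `a_u(x,y)` (`structureConst φ u x y`).
On `x ⊗ y` the two sides of (ii) are `φ(x ⊗ y) ⊗ xy` and `Σ_u a_u(x,y) u ⊗ yu`, so (ii) says
exactly that `a_u(x,y) = 0` unless `xy = yu`, i.e. `u = y⁻¹xy`. On `x ⊗ y ⊗ z` the coefficient of
`w` in (i) is `a_{zwz⁻¹}(x,y) + a_w(x ◁ y, z) − a_w(x, yz)`; under that vanishing all three
terms are zero unless `w = (yz)⁻¹x(yz)`, and there the identity is the cocycle condition. -/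

open TensorProduct

variable (k G : Type*) [Field k] [Group G]

/-- The comultiplication of the group Hopf algebra `kG`: `Δ(g) = g ⊗ g`. -/
noncomputable def groupComul :
    MonoidAlgebra k G →ₗ[k] MonoidAlgebra k G ⊗[k] MonoidAlgebra k G :=
  (Finsupp.lsum k fun g =>
    LinearMap.toSpanSingleton k _ (MonoidAlgebra.of k G g ⊗ₜ[k] MonoidAlgebra.of k G g))
    ∘ₗ (MonoidAlgebra.coeffLinearEquiv k).toLinearMap

/-- The antipode of the group Hopf algebra `kG`: `S(g) = g⁻¹`. -/
noncomputable def groupAntipode : MonoidAlgebra k G →ₗ[k] MonoidAlgebra k G :=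
  (Finsupp.lsum k fun g => LinearMap.toSpanSingleton k _ (MonoidAlgebra.of k G g⁻¹))
    ∘ₗ (MonoidAlgebra.coeffLinearEquiv k).toLinearMap

/-- The adjoint map `ad(x ⊗ y) = S(y₁) x y₂` of the group Hopf algebra;
on group elements `ad(x ⊗ y) = y⁻¹ x y`. -/
noncomputable def groupAd :
    MonoidAlgebra k G ⊗[k] MonoidAlgebra k G →ₗ[k] MonoidAlgebra k G :=
  (LinearMap.mul' k _) ∘ₗ
    (TensorProduct.map
      ((LinearMap.mul' k _) ∘ₗ (TensorProduct.map (groupAntipode k G) LinearMap.id) ∘ₗ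
        (TensorProduct.comm k _ _).toLinearMap)
      LinearMap.id) ∘ₗ
    (TensorProduct.assoc k _ _ _).symm.toLinearMap ∘ₗ
    (TensorProduct.map LinearMap.id (groupComul k G))

/-- The transposition `τ ⊗ 1` on `kG ⊗ (kG ⊗ kG)`. -/
noncomputable def gTauOne :
    MonoidAlgebra k G ⊗[k] (MonoidAlgebra k G ⊗[k] MonoidAlgebra k G) →ₗ[k]
      MonoidAlgebra k G ⊗[k] (MonoidAlgebra k G ⊗[k] MonoidAlgebra k G) :=
  (TensorProduct.assoc k _ _ _).toLinearMap ∘ₗ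
    (TensorProduct.map (TensorProduct.comm k _ _).toLinearMap LinearMap.id) ∘ₗ
    (TensorProduct.assoc k _ _ _).symm.toLinearMap

open MonoidAlgebra

section Ext

variable {R M N : Type*} [CommSemiring R] [Monoid M] [AddCommMonoid N] [Module R N]

theorem MonoidAlgebra.tensor_linearMap_ext_iff {f g : R[M] ⊗[R] R[M] →ₗ[R] N} :
    f = g ↔ ∀ x y : M, f (of R M x ⊗ₜ of R M y) = g (of R M x ⊗ₜ of R M y) :=
  ⟨by rintro rfl _ _; rfl, fun h =>
    ((basis M R).tensorProduct (basis M R)).ext fun i => by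
      simpa [Module.Basis.tensorProduct_apply'] using h i.1 i.2⟩

theorem MonoidAlgebra.tensor₃_linearMap_ext_iff {f g : (R[M] ⊗[R] R[M]) ⊗[R] R[M] →ₗ[R] N} :
    f = g ↔ ∀ x y z : M,
      f ((of R M x ⊗ₜ of R M y) ⊗ₜ of R M z) = g ((of R M x ⊗ₜ of R M y) ⊗ₜ of R M z) :=
  ⟨by rintro rfl _ _ _; rfl, fun h =>
    (((basis M R).tensorProduct (basis M R)).tensorProduct (basis M R)).ext fun i => by
      simpa [Module.Basis.tensorProduct_apply'] using h i.1.1 i.1.2 i.2⟩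

theorem MonoidAlgebra.repr_tmul_of (c : R[M]) (g u v : M) :
    ((basis M R).tensorProduct (basis M R)).repr (c ⊗ₜ of R M g) (u, v) =
      Finsupp.single g (c.coeff u) v := by
  classical
  simp [Module.Basis.tensorProduct_repr_tmul_apply, basis, Finsupp.single_apply]

end Ext

variable {k G}

theorem groupComul_single (g : G) (r : k) :
    groupComul k G (single g r) = r • (of k G g ⊗ₜ of k G g) := by
  simp [groupComul, LinearMap.toSpanSingleton_apply]

theorem groupComul_of (g : G) : groupComul k G (of k G g) = of k G g ⊗ₜ of k G g := by
  simpa using groupComul_single g (1 : k)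

theorem groupAntipode_of (g : G) : groupAntipode k G (of k G g) = of k G g⁻¹ := by
  simp [groupAntipode, LinearMap.toSpanSingleton_apply]

theorem groupAd_tmul_of (c : MonoidAlgebra k G) (g : G) :
    groupAd k G (c ⊗ₜ of k G g) = of k G g⁻¹ * c * of k G g := by
  simp only [groupAd, LinearMap.comp_apply, LinearEquiv.coe_coe, TensorProduct.map_tmul,
    groupComul_of, TensorProduct.assoc_symm_tmul, TensorProduct.comm_tmul, groupAntipode_of,
    LinearMap.id_apply, LinearMap.mul'_apply]

theorem groupAd_of_tmul_of (x y : G) :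
    groupAd k G (of k G x ⊗ₜ of k G y) = of k G (y⁻¹ * x * y) := by
  rw [groupAd_tmul_of, ← map_mul, ← map_mul]

theorem coeff_groupAd_tmul_of (c : MonoidAlgebra k G) (g w : G) :
    (groupAd k G (c ⊗ₜ of k G g)).coeff w = c.coeff (g * w * g⁻¹) := by
  rw [groupAd_tmul_of]
  simp [mul_assoc]

omit [Group G] in
theorem gTauOne_tmul (x y z : MonoidAlgebra k G) :
    gTauOne k G (x ⊗ₜ (y ⊗ₜ z)) = y ⊗ₜ (x ⊗ₜ z) := by
  simp [gTauOne]

theorem repr_gTauOne_comul_of_tmul (c : MonoidAlgebra k G) (y u v : G) :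
    ((basis G k).tensorProduct (basis G k)).repr
      ((TensorProduct.map LinearMap.id (LinearMap.mul' k _) ∘ₗ gTauOne k G ∘ₗ
        TensorProduct.map LinearMap.id (groupComul k G)) (of k G y ⊗ₜ c)) (u, v) =
      Finsupp.single (y * u) (c.coeff u) v := by
  induction c using MonoidAlgebra.induction_linear with
  | zero => simp
  | add c d hc hd =>
    rw [TensorProduct.tmul_add, map_add, map_add, Finsupp.add_apply, hc, hd, coeff_add,
      Finsupp.add_apply, Finsupp.single_add, Finsupp.add_apply]
  | single g r =>
    rw [← smul_of]
    simp only [LinearMap.comp_apply, TensorProduct.map_tmul, LinearMap.id_apply,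
      TensorProduct.tmul_smul, map_smul, groupComul_of, gTauOne_tmul, LinearMap.mul'_apply,
      ← map_mul, Finsupp.smul_apply, repr_tmul_of, coeff_smul_apply, smul_eq_mul]
    rw [← smul_eq_mul, ← Finsupp.smul_apply, Finsupp.smul_single, smul_eq_mul]
    by_cases h : g = u
    · rw [h]
    · simp [h]

noncomputable def structureConst
    (φ : MonoidAlgebra k G ⊗[k] MonoidAlgebra k G →ₗ[k] MonoidAlgebra k G) (u x y : G) : k :=
  (φ (of k G x ⊗ₜ of k G y)).coeff u

theorem d21_eq_zero_iff (φ : MonoidAlgebra k G ⊗[k] MonoidAlgebra k G →ₗ[k] MonoidAlgebra k G) :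
    groupAd k G ∘ₗ TensorProduct.map φ LinearMap.id +
        φ ∘ₗ TensorProduct.map (groupAd k G) LinearMap.id -
        φ ∘ₗ (TensorProduct.map LinearMap.id (LinearMap.mul' k _)) ∘ₗ
          (TensorProduct.assoc k _ _ _).toLinearMap = 0 ↔
      ∀ x y z w : G, structureConst φ (z * w * z⁻¹) x y + structureConst φ w (y⁻¹ * x * y) z -
        structureConst φ w x (y * z) = 0 := by
  rw [tensor₃_linearMap_ext_iff]
  refine forall₃_congr fun x y z => ?_
  rw [LinearMap.zero_apply, ← coeff_eq_zero, Finsupp.ext_iff]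
  simp [structureConst, coeff_groupAd_tmul_of, groupAd_of_tmul_of, -of_apply]

theorem d22_eq_iff (φ : MonoidAlgebra k G ⊗[k] MonoidAlgebra k G →ₗ[k] MonoidAlgebra k G) :
    TensorProduct.map φ (LinearMap.mul' k _) ∘ₗ
          (TensorProduct.tensorTensorTensorComm k _ _ _ _).toLinearMap ∘ₗ
          TensorProduct.map (groupComul k G) (groupComul k G) =
        TensorProduct.map LinearMap.id (LinearMap.mul' k _) ∘ₗ gTauOne k G ∘ₗ
          TensorProduct.map LinearMap.id (groupComul k G) ∘ₗ
          TensorProduct.map LinearMap.id φ ∘ₗ gTauOne k G ∘ₗ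
          TensorProduct.map LinearMap.id (groupComul k G) ↔
      ∀ x y u : G, Finsupp.single (x * y) (structureConst φ u x y) =
        Finsupp.single (y * u) (structureConst φ u x y) := by
  rw [tensor_linearMap_ext_iff]
  refine forall₂_congr fun x y => ?_
  have hL : (TensorProduct.map φ (LinearMap.mul' k _) ∘ₗ
      (TensorProduct.tensorTensorTensorComm k _ _ _ _).toLinearMap ∘ₗ
      TensorProduct.map (groupComul k G) (groupComul k G)) (of k G x ⊗ₜ of k G y) =
        φ (of k G x ⊗ₜ of k G y) ⊗ₜ of k G (x * y) := by
    simp only [LinearMap.comp_apply, LinearEquiv.coe_coe, TensorProduct.map_tmul, groupComul_of,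
      TensorProduct.tensorTensorTensorComm_tmul, LinearMap.mul'_apply, map_mul]
  have hR : (TensorProduct.map LinearMap.id (LinearMap.mul' k _) ∘ₗ gTauOne k G ∘ₗ
      TensorProduct.map LinearMap.id (groupComul k G) ∘ₗ
      TensorProduct.map LinearMap.id φ ∘ₗ gTauOne k G ∘ₗ
      TensorProduct.map LinearMap.id (groupComul k G)) (of k G x ⊗ₜ of k G y) =
        (TensorProduct.map LinearMap.id (LinearMap.mul' k _) ∘ₗ gTauOne k G ∘ₗ
          TensorProduct.map LinearMap.id (groupComul k G))
          (of k G y ⊗ₜ φ (of k G x ⊗ₜ of k G y)) := by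
    simp only [LinearMap.comp_apply, TensorProduct.map_tmul, LinearMap.id_apply, groupComul_of,
      gTauOne_tmul]
  rw [hL, hR, ((basis G k).tensorProduct (basis G k)).ext_elem_iff, Prod.forall]
  refine forall_congr' fun u => ?_
  rw [Finsupp.ext_iff]
  refine forall_congr' fun v => ?_
  rw [repr_tmul_of, repr_gTauOne_comul_of_tmul]
  rfl

theorem forall_single_mul_eq_single_mul_iff {A : Type*} [Zero A] (a : G → G → G → A) :
    (∀ x y u : G, Finsupp.single (x * y) (a u x y) = Finsupp.single (y * u) (a u x y)) ↔
      ∀ u x y : G, u ≠ y⁻¹ * x * y → a u x y = 0 := by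
  refine ⟨fun h u x y hu => ?_, fun h x y u => ?_⟩
  · rcases (Finsupp.single_eq_single_iff _ _ _ _).1 (h x y u) with ⟨hxy, -⟩ | ⟨ha, -⟩
    · exact absurd (by rw [mul_assoc, eq_inv_mul_iff_mul_eq, hxy]) hu
    · exact ha
  · by_cases hu : u = y⁻¹ * x * y
    · rw [hu, ← mul_assoc, mul_inv_cancel_left]
    · rw [h u x y hu, Finsupp.single_zero, Finsupp.single_zero]

theorem forall_conj_cocycle_iff {A : Type*} [AddCommGroup A] (a : G → G → G → A)
    (ha : ∀ u x y : G, u ≠ y⁻¹ * x * y → a u x y = 0) :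
    (∀ x y z w : G, a (z * w * z⁻¹) x y + a w (y⁻¹ * x * y) z - a w x (y * z) = 0) ↔
      ∀ x y z : G, a (y⁻¹ * x * y) x y + a (z⁻¹ * (y⁻¹ * x * y) * z) (y⁻¹ * x * y) z -
        a ((y * z)⁻¹ * x * (y * z)) x (y * z) = 0 := by
  have conj_z : ∀ x y z : G, z * (z⁻¹ * (y⁻¹ * x * y) * z) * z⁻¹ = y⁻¹ * x * y := by
    intros; group
  have conj_yz : ∀ x y z : G, (y * z)⁻¹ * x * (y * z) = z⁻¹ * (y⁻¹ * x * y) * z := by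
    intros; group
  refine ⟨fun h x y z => ?_, fun h x y z w => ?_⟩
  · simpa only [conj_z, conj_yz] using h x y z (z⁻¹ * (y⁻¹ * x * y) * z)
  · by_cases hw : w = z⁻¹ * (y⁻¹ * x * y) * z
    · simpa only [hw, conj_z, conj_yz] using h x y z
    · rw [ha _ x y fun h => hw (by rw [← h]; group), ha _ _ z hw,
        ha _ x _ fun h => hw (by rw [h, conj_yz]), add_zero, sub_zero]

variable (k G)

/-- A linear map `φ : kG ⊗ kG → kG`, with coefficients `a_u(x,y)` of `φ(x ⊗ y)`
on basis group elements, satisfies the two adjoint 2-cocycle conditions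
`ad(φ ⊗ 1) + φ(ad ⊗ 1) − φ(1 ⊗ μ) = 0` and
`(φ ⊗ μ)(1 ⊗ τ ⊗ 1)(Δ ⊗ Δ) = (1 ⊗ μ)(τ ⊗ 1)(1 ⊗ Δ)(1 ⊗ φ)(τ ⊗ 1)(1 ⊗ Δ)`
if and only if `a_u(x,y) = 0` unless `u = y⁻¹xy`, and
`a(x,y) := a_{y⁻¹xy}(x,y)` satisfies `a(x,y) + a(x ◁ y, z) − a(x, yz) = 0`. -/
theorem group_algebra_Z2_characterization
    (φ : MonoidAlgebra k G ⊗[k] MonoidAlgebra k G →ₗ[k] MonoidAlgebra k G) :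
    letI a : G → G → G → k :=
      fun u x y => (φ (MonoidAlgebra.of k G x ⊗ₜ[k] MonoidAlgebra.of k G y)).coeff u
    ((groupAd k G ∘ₗ TensorProduct.map φ LinearMap.id +
        φ ∘ₗ TensorProduct.map (groupAd k G) LinearMap.id -
        φ ∘ₗ (TensorProduct.map LinearMap.id (LinearMap.mul' k _)) ∘ₗ
          (TensorProduct.assoc k _ _ _).toLinearMap = 0) ∧
      (TensorProduct.map φ (LinearMap.mul' k _) ∘ₗ
          (TensorProduct.tensorTensorTensorComm k _ _ _ _).toLinearMap ∘ₗ
          TensorProduct.map (groupComul k G) (groupComul k G) =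
        TensorProduct.map LinearMap.id (LinearMap.mul' k _) ∘ₗ gTauOne k G ∘ₗ
          TensorProduct.map LinearMap.id (groupComul k G) ∘ₗ
          TensorProduct.map LinearMap.id φ ∘ₗ gTauOne k G ∘ₗ
          TensorProduct.map LinearMap.id (groupComul k G)))
    ↔ ((∀ u x y : G, u ≠ y⁻¹ * x * y → a u x y = 0) ∧
        (∀ x y z : G, a (y⁻¹ * x * y) x y +
          a (z⁻¹ * (y⁻¹ * x * y) * z) (y⁻¹ * x * y) z -
          a ((y * z)⁻¹ * x * (y * z)) x (y * z) = 0)) := by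
  rw [d21_eq_zero_iff, d22_eq_iff, forall_single_mul_eq_single_mul_iff]
  exact ⟨fun ⟨hd, ha⟩ => ⟨ha, (forall_conj_cocycle_iff _ ha).1 hd⟩,
    fun ⟨ha, hc⟩ => ⟨(forall_conj_cocycle_iff _ ha).2 hc, ha⟩⟩
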